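/- Let char k = 0 and let f : kⁿ → k be a homogeneous polynomial of degree d. Then Ann(f) = {D ∈ k[∂₁,…,∂ₙ] | D·f = 0} is a homogeneous ideal, and the graded quotient algebra A = k[∂₁,…,∂ₙ]/Ann(f) = ⊕_{i=0}^d Aᵢ satisfies A_d ≅ k (provided f ≠ 0) and the multiplication pairing Aᵢ × A_{d−i} → A_d is non-degenerate for all 0 ≤ i ≤ d. -/

import Mathlib

/-!
On monomials, `∂^m (x^t) = (∏ᵢ tᵢ!/(tᵢ-mᵢ)!) x^(t-m)` (zero unless `m ≤ t`). Hence an operator of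
degree `i` maps a form of degree `d` to a form of degree `d - i`, and kills it when `i > d`; so the
graded pieces of `D·f = 0` vanish separately and `Ann f` is homogeneous. Evaluating at `0` gives
`(∂^m g)(0) = m! · coeff_m g`, so for a nonzero form `g` the operator `∂^m`, with `x^m` a monomial
of `g`, has `(∂^m g)(0) ≠ 0` in characteristic `0`. Taking `g = f` shows `A_d ≠ 0`, and taking
`g = D·f` with `E = ∂^m` gives `((D E)·f)(0) = (E·(D·f))(0) ≠ 0`, i.e. the pairing is nondegenerate.
-/

open MvPolynomial

/-- The differential operator corresponding to a monomial in `k[∂₁,…,∂ₙ]`. -/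
noncomputable def Dmon (k : Type) [Field k] (n : ℕ) (m : Fin n →₀ ℕ) :
    Module.End k (MvPolynomial (Fin n) k) :=
  (List.ofFn fun i : Fin n =>
    ((pderiv i).toLinearMap : Module.End k (MvPolynomial (Fin n) k)) ^ (m i)).prod

/-- The constant-coefficient differential operator `D ∈ k[∂₁,…,∂ₙ]` (encoded as a
polynomial in `k[x₁,…,xₙ]`) acting on `k[x₁,…,xₙ]`. -/
noncomputable def diffOp {k : Type} [Field k] {n : ℕ} (D : MvPolynomial (Fin n) k) :
    Module.End k (MvPolynomial (Fin n) k) :=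
  (AddMonoidAlgebra.coeff D).sum fun m c => c • Dmon k n m

namespace MvPolynomial

variable {σ R : Type*} [CommSemiring R]

theorem pderiv_pderiv_comm (i j : σ) (p : MvPolynomial σ R) :
    pderiv i (pderiv j p) = pderiv j (pderiv i p) := by
  classical
  rcases eq_or_ne i j with rfl | hij
  · rfl
  induction p using MvPolynomial.induction_on' with
  | add p q hp hq => simp only [map_add, hp, hq]
  | monomial s c =>
    simp only [pderiv_monomial, Finsupp.tsub_apply, Finsupp.single_eq_of_ne hij,
      Finsupp.single_eq_of_ne hij.symm, tsub_right_comm, Nat.sub_zero]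
    congr 1
    ring

theorem pderiv_pow_monomial (i : σ) (e : ℕ) (s : σ →₀ ℕ) (c : R) :
    ((pderiv i).toLinearMap ^ e : Module.End R (MvPolynomial σ R)) (monomial s c)
      = monomial (s - Finsupp.single i e) (c * (s i).descFactorial e) := by
  classical
  induction e with
  | zero => simp
  | succ e ih =>
    rw [pow_succ', Module.End.mul_apply, ih, Derivation.coeFn_coe, pderiv_monomial,
      tsub_tsub, ← Finsupp.single_add, Finsupp.tsub_apply, Finsupp.single_eq_same,
      Nat.descFactorial_succ]
    push_cast
    congr 1
    ring

theorem commute_pderiv (i j : σ) :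
    Commute ((pderiv i).toLinearMap : Module.End R (MvPolynomial σ R)) (pderiv j).toLinearMap :=
  LinearMap.ext (pderiv_pderiv_comm i j)

theorem pairwise_commute_pderiv_pow (e : σ → ℕ) (s : Set σ) :
    s.Pairwise (Function.onFun Commute
      fun i => ((pderiv i).toLinearMap ^ e i : Module.End R (MvPolynomial σ R))) :=
  fun i _ j _ _ => (commute_pderiv i j).pow_pow _ _

theorem noncommProd_pderiv_pow_monomial [DecidableEq σ] (e : σ →₀ ℕ) (s : Finset σ)
    (t : σ →₀ ℕ) (c : R) :
    s.noncommProd (fun i => ((pderiv i).toLinearMap ^ e i : Module.End R (MvPolynomial σ R)))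
        (pairwise_commute_pderiv_pow e _) (monomial t c)
      = monomial (t - ∑ i ∈ s, Finsupp.single i (e i))
          (c * ∏ i ∈ s, ((t i).descFactorial (e i) : R)) := by
  induction s using Finset.induction_on with
  | empty => rw [Finset.noncommProd_empty]; simp
  | insert j s hj ih =>
    rw [Finset.noncommProd_insert_of_notMem _ _ _ _ hj, Module.End.mul_apply, ih,
      pderiv_pow_monomial, Finset.sum_insert hj, Finset.prod_insert hj, tsub_tsub, add_comm]
    have htj : (t - ∑ i ∈ s, Finsupp.single i (e i)) j = t j := by
      rw [Finsupp.tsub_apply, Finset.sum_apply', Finset.sum_eq_zero fun i hi => ?_, Nat.sub_zero]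
      exact Finsupp.single_eq_of_ne (ne_of_mem_of_not_mem hi hj).symm
    rw [htj]
    congr 1
    ring

end MvPolynomial

section DiffOp

variable {k : Type} [Field k] {n : ℕ}

theorem dmon_eq_noncommProd (m : Fin n →₀ ℕ) :
    Dmon k n m = Finset.univ.noncommProd
      (fun i => ((pderiv i).toLinearMap ^ m i : Module.End k (MvPolynomial (Fin n) k)))
      (pairwise_commute_pderiv_pow m _) := by
  simp [Dmon, Finset.noncommProd, Fin.univ_val_map]

theorem dmon_monomial (m t : Fin n →₀ ℕ) (c : k) :
    Dmon k n m (monomial t c) = monomial (t - m) (c * ∏ i, ((t i).descFactorial (m i) : k)) := by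
  rw [dmon_eq_noncommProd, noncommProd_pderiv_pow_monomial, Finsupp.univ_sum_single]

theorem dmon_monomial_of_not_le {m t : Fin n →₀ ℕ} (h : ¬m ≤ t) (c : k) :
    Dmon k n m (monomial t c) = 0 := by
  obtain ⟨i, hi⟩ : ∃ i, t i < m i := by simpa [Finsupp.le_def] using h
  rw [dmon_monomial, Finset.prod_eq_zero (Finset.mem_univ i) (by simp [Nat.descFactorial_of_lt hi]),
    mul_zero, monomial_zero]

theorem dmon_zero : Dmon k n 0 = 1 := by
  simp [Dmon]

theorem dmon_add (a b : Fin n →₀ ℕ) : Dmon k n (a + b) = Dmon k n a * Dmon k n b := by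
  simp only [dmon_eq_noncommProd, Finsupp.add_apply, pow_add]
  exact Finset.noncommProd_mul_distrib _ _ _ _ fun i _ j _ _ => (commute_pderiv i j).pow_pow _ _

theorem constantCoeff_dmon (m : Fin n →₀ ℕ) (p : MvPolynomial (Fin n) k) :
    constantCoeff (Dmon k n m p) = (∏ i, ((m i).factorial : k)) * coeff m p := by
  induction p using MvPolynomial.induction_on' with
  | add p q hp hq => rw [map_add, map_add, hp, hq, coeff_add, mul_add]
  | monomial t c =>
    rw [coeff_monomial]
    by_cases hmt : m ≤ t
    · rw [dmon_monomial, constantCoeff_monomial]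
      rcases eq_or_ne t m with rfl | htm
      · simp [Nat.descFactorial_self, mul_comm]
      · simp [htm, tsub_eq_zero_iff_le, (lt_of_le_of_ne hmt htm.symm).not_ge]
    · rw [dmon_monomial_of_not_le hmt, map_zero, if_neg (fun h => hmt h.ge), mul_zero]

theorem constantCoeff_dmon_ne_zero [CharZero k] {m : Fin n →₀ ℕ} {p : MvPolynomial (Fin n) k}
    (h : coeff m p ≠ 0) : constantCoeff (Dmon k n m p) ≠ 0 := by
  rw [constantCoeff_dmon]
  exact mul_ne_zero
    (Finset.prod_ne_zero_iff.mpr fun i _ => Nat.cast_ne_zero.mpr (Nat.factorial_ne_zero _)) h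

theorem dmon_monomial_isHomogeneous (m t : Fin n →₀ ℕ) (c : k) :
    (Dmon k n m (monomial t c)).IsHomogeneous (t.degree - m.degree) := by
  by_cases hmt : m ≤ t
  · rw [dmon_monomial]
    exact isHomogeneous_monomial _ (map_tsub_of_le Finsupp.degree t m hmt).symm
  · rw [dmon_monomial_of_not_le hmt]
    exact isHomogeneous_zero _ _ _

theorem dmon_isHomogeneous (m : Fin n →₀ ℕ) {f : MvPolynomial (Fin n) k} {d : ℕ}
    (hf : f.IsHomogeneous d) : (Dmon k n m f).IsHomogeneous (d - m.degree) := by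
  rw [← f.support_sum_monomial_coeff, map_sum]
  refine IsHomogeneous.sum _ _ _ fun t ht => ?_
  have htd : t.degree = d := (hf.degree_eq_sum_deg_support ht).symm
  exact htd ▸ dmon_monomial_isHomogeneous m t (coeff t f)

theorem dmon_eq_zero_of_lt_degree {m : Fin n →₀ ℕ} {f : MvPolynomial (Fin n) k} {d : ℕ}
    (hf : f.IsHomogeneous d) (hm : d < m.degree) : Dmon k n m f = 0 := by
  rw [← f.support_sum_monomial_coeff, map_sum]
  refine Finset.sum_eq_zero fun t ht => dmon_monomial_of_not_le (fun hmt => ?_) _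
  have htd : t.degree = d := (hf.degree_eq_sum_deg_support ht).symm
  exact (Finsupp.degree_mono hmt).not_gt (htd ▸ hm)

theorem diffOp_monomial (m : Fin n →₀ ℕ) (c : k) : diffOp (monomial m c) = c • Dmon k n m :=
  Finsupp.sum_single_index (zero_smul k _)

theorem diffOp_zero : diffOp (0 : MvPolynomial (Fin n) k) = 0 :=
  Finsupp.sum_zero_index

theorem diffOp_one : diffOp (1 : MvPolynomial (Fin n) k) = 1 := by
  rw [← C_1, C_apply, diffOp_monomial, dmon_zero, one_smul]

theorem diffOp_add (D E : MvPolynomial (Fin n) k) : diffOp (D + E) = diffOp D + diffOp E :=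
  Finsupp.sum_add_index' (fun _ => zero_smul k _) fun _ _ _ => add_smul _ _ _

theorem diffOp_mul (D E : MvPolynomial (Fin n) k) : diffOp (D * E) = diffOp D * diffOp E := by
  induction D using MvPolynomial.induction_on' with
  | add D D' hD hD' => rw [add_mul, diffOp_add, diffOp_add, hD, hD', add_mul]
  | monomial a c =>
    induction E using MvPolynomial.induction_on' with
    | add E E' hE hE' => rw [mul_add, diffOp_add, diffOp_add, hE, hE', mul_add]
    | monomial b c' =>
      rw [monomial_mul, diffOp_monomial, diffOp_monomial, diffOp_monomial, dmon_add,
        smul_mul_smul_comm]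

theorem diffOp_homogeneousComponent_apply_eq_zero {f : MvPolynomial (Fin n) k} {d : ℕ}
    (hf : f.IsHomogeneous d) (D : MvPolynomial (Fin n) k) {j : ℕ} (hj : d < j) :
    diffOp (homogeneousComponent j D) f = 0 := by
  induction D using MvPolynomial.induction_on' with
  | add D E hD hE => rw [map_add, diffOp_add, LinearMap.add_apply, hD, hE, add_zero]
  | monomial m c =>
    rw [homogeneousComponent_of_mem (isHomogeneous_monomial c rfl)]
    split_ifs with hjm
    · rw [diffOp_monomial, LinearMap.smul_apply, dmon_eq_zero_of_lt_degree hf (hjm ▸ hj),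
        smul_zero]
    · rw [diffOp_zero, LinearMap.zero_apply]

theorem homogeneousComponent_diffOp {f : MvPolynomial (Fin n) k} {d : ℕ} (hf : f.IsHomogeneous d)
    (D : MvPolynomial (Fin n) k) {j : ℕ} (hj : j ≤ d) :
    homogeneousComponent (d - j) (diffOp D f) = diffOp (homogeneousComponent j D) f := by
  induction D using MvPolynomial.induction_on' with
  | add D E hD hE => rw [diffOp_add, map_add, LinearMap.add_apply, map_add, hD, hE, diffOp_add,
      LinearMap.add_apply]
  | monomial m c =>
    have hDf : (c • Dmon k n m f).IsHomogeneous (d - m.degree) :=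
      (homogeneousSubmodule (Fin n) k _).smul_mem c (dmon_isHomogeneous m hf)
    rw [homogeneousComponent_of_mem (isHomogeneous_monomial c rfl), diffOp_monomial,
      LinearMap.smul_apply, homogeneousComponent_of_mem hDf]
    by_cases hjm : j = m.degree
    · rw [if_pos (by rw [hjm]), if_pos hjm, diffOp_monomial, LinearMap.smul_apply]
    rw [if_neg hjm, diffOp_zero, LinearMap.zero_apply]
    by_cases hmd : d < m.degree
    · rw [dmon_eq_zero_of_lt_degree hf hmd, smul_zero, ite_self]
    · rw [if_neg (by omega)]

theorem diffOp_isHomogeneous {D f : MvPolynomial (Fin n) k} {i d : ℕ} (hD : D.IsHomogeneous i)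
    (hf : f.IsHomogeneous d) (hi : i ≤ d) : (diffOp D f).IsHomogeneous (d - i) := by
  rw [← homogeneousComponent_eq_self hD, ← homogeneousComponent_diffOp hf D hi]
  exact homogeneousComponent_isHomogeneous _ _

theorem exists_isHomogeneous_constantCoeff_diffOp_ne_zero [CharZero k]
    {g : MvPolynomial (Fin n) k} {e : ℕ} (hg : g.IsHomogeneous e) (hg0 : g ≠ 0) :
    ∃ E : MvPolynomial (Fin n) k, E.IsHomogeneous e ∧ constantCoeff (diffOp E g) ≠ 0 := by
  obtain ⟨m, hm⟩ := ne_zero_iff.mp hg0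
  refine ⟨monomial m 1, isHomogeneous_monomial 1 (hg.degree_eq_sum_deg_support
    (mem_support_iff.mpr hm)).symm, ?_⟩
  rw [diffOp_monomial, one_smul]
  exact constantCoeff_dmon_ne_zero hm

end DiffOp

/-- For a nonzero homogeneous `f` of degree `d` (char `k = 0`): `Ann(f)` is a homogeneous
ideal; the top graded component `A_d` of `A = k[∂₁,…,∂ₙ]/Ann(f)` is isomorphic to `k` via
`D ↦ (D·f)(0)` (every degree-`d` operator sends `f` to a constant, and some degree-`d`
operator has `(D·f)(0) ≠ 0`); and the multiplication pairing `Aᵢ × A_{d-i} → A_d ≅ k` is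
non-degenerate for each `0 ≤ i ≤ d`. -/
theorem stmt17 (k : Type) [Field k] [CharZero k] (n d : ℕ)
    (f : MvPolynomial (Fin n) k) (hf : f.IsHomogeneous d) (hf0 : f ≠ 0) :
    (∀ D : MvPolynomial (Fin n) k, diffOp D f = 0 →
      ∀ i : ℕ, diffOp (homogeneousComponent i D) f = 0) ∧
    (∀ D : MvPolynomial (Fin n) k, D.IsHomogeneous d →
      diffOp D f = MvPolynomial.C (MvPolynomial.constantCoeff (diffOp D f))) ∧
    (∃ D : MvPolynomial (Fin n) k, D.IsHomogeneous d ∧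
      MvPolynomial.constantCoeff (diffOp D f) ≠ 0) ∧
    (∀ i : ℕ, i ≤ d → ∀ D : MvPolynomial (Fin n) k, D.IsHomogeneous i →
      diffOp D f ≠ 0 → ∃ E : MvPolynomial (Fin n) k, E.IsHomogeneous (d - i) ∧
        MvPolynomial.constantCoeff (diffOp (D * E) f) ≠ 0) := by
  refine ⟨fun D hD i => ?_, fun D hD => ?_, ?_, fun i hi D hD hDf => ?_⟩
  · rcases lt_or_ge d i with hdi | hid
    · exact diffOp_homogeneousComponent_apply_eq_zero hf D hdi
    · rw [← homogeneousComponent_diffOp hf D hid, hD, map_zero]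
  · have h0 : (diffOp D f).IsHomogeneous 0 := Nat.sub_self d ▸ diffOp_isHomogeneous hD hf le_rfl
    exact totalDegree_eq_zero_iff_eq_C.mp ((totalDegree_zero_iff_isHomogeneous _).mpr h0)
  · simpa [diffOp_one] using exists_isHomogeneous_constantCoeff_diffOp_ne_zero hf hf0
  · obtain ⟨E, hE, hEf⟩ :=
      exists_isHomogeneous_constantCoeff_diffOp_ne_zero (diffOp_isHomogeneous hD hf hi) hDf
    refine ⟨E, hE, ?_⟩
    rwa [mul_comm, diffOp_mul, Module.End.mul_apply]
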